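/- arXiv:0812.2937 — 3 statements merged into one kernel-verified Lean document; each statement's English description precedes it below -/
import Mathlib

section
/- Let k ≥ 2 and let A be a k×k real matrix all of whose row sums and column sums are 0. Let Ã be the (k−1)×(k−1) submatrix obtained by deleting the last row and column. Then vec(Ã)ᵀ · ((J_{k−1}+I_{k−1})⊗(J_{k−1}+I_{k−1})) · vec(Ã) = ∑_{i=1}^k ∑_{j=1}^k A(i,j)². -/
open Matrix Kronecker Finset

/-- If A is k×k with zero row and column sums and Ã is obtained by deleting the
last row and column, then vec(Ã)ᵀ (J_{k−1}+I_{k−1})⊗(J_{k−1}+I_{k−1}) vec(Ã)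
= ∑_{i,j} A(i,j)². -/
theorem stmt_5 (k : ℕ) (hk : 2 ≤ k)
    (A : Matrix (Fin k) (Fin k) ℝ)
    (hrow : ∀ i, ∑ j, A i j = 0) (hcol : ∀ j, ∑ i, A i j = 0)
    (J : Matrix (Fin (k - 1)) (Fin (k - 1)) ℝ) (hJ : ∀ i j, J i j = 1)
    (Atil : Matrix (Fin (k - 1)) (Fin (k - 1)) ℝ)
    (hAtil : ∀ i j, Atil i j = A (Fin.castLE (Nat.sub_le k 1) i) (Fin.castLE (Nat.sub_le k 1) j))
    (vecA : Fin (k - 1) × Fin (k - 1) → ℝ) (hvec : ∀ x, vecA x = Atil x.2 x.1) :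
    vecA ⬝ᵥ ((J + 1) ⊗ₖ (J + 1)).mulVec vecA =
      ∑ i : Fin k, ∑ j : Fin k, A i j ^ 2 := by
  obtain ⟨n, rfl⟩ : ∃ n, k = n + 1 := ⟨k - 1, by omega⟩
  have hA : ∀ (i j : Fin n), A i.castSucc j.castSucc = Atil i j := by
    intro i j; rw [hAtil]; rfl
  -- last column / row / corner entries of A
  have hRlast : ∀ i : Fin n, A i.castSucc (Fin.last n) = -(∑ j : Fin n, Atil i j) := by
    intro i
    have h := hrow i.castSucc
    rw [Fin.sum_univ_castSucc] at h
    simp only [hA] at h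
    linarith
  have hClast : ∀ j : Fin n, A (Fin.last n) j.castSucc = -(∑ i : Fin n, Atil i j) := by
    intro j
    have h := hcol j.castSucc
    rw [Fin.sum_univ_castSucc] at h
    simp only [hA] at h
    linarith
  have hlast : A (Fin.last n) (Fin.last n) = ∑ j : Fin n, ∑ i : Fin n, Atil i j := by
    have h := hrow (Fin.last n)
    rw [Fin.sum_univ_castSucc] at h
    simp only [hClast, Finset.sum_neg_distrib] at h
    linarith
  -- RHS decomposition
  have hRHS : ∑ i : Fin (n+1), ∑ j : Fin (n+1), A i j ^ 2
      = (∑ j : Fin n, ∑ i : Fin n, Atil i j) ^ 2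
        + (∑ j : Fin n, (∑ i : Fin n, Atil i j) ^ 2)
        + (∑ i : Fin n, (∑ j : Fin n, Atil i j) ^ 2)
        + ∑ j : Fin n, ∑ i : Fin n, Atil i j ^ 2 := by
    rw [Fin.sum_univ_castSucc]
    simp only [Fin.sum_univ_castSucc, hA, hRlast, hClast, hlast]
    rw [Finset.sum_add_distrib]
    simp only [neg_sq]
    have c1 : ∑ x : Fin n, ∑ y : Fin n, Atil x y ^ 2 = ∑ y : Fin n, ∑ x : Fin n, Atil x y ^ 2 :=
      Finset.sum_comm
    linarith
  rw [hRHS]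
  -- LHS expansion
  have inner : ∀ (j i : Fin n),
      ∑ j' : Fin n, ∑ i' : Fin n,
        ((1 + if j = j' then (1:ℝ) else 0) * ((1 + if i = i' then (1:ℝ) else 0) * Atil i' j'))
      = (∑ j' : Fin n, ∑ i' : Fin n, Atil i' j') + (∑ i' : Fin n, Atil i' j)
        + (∑ j' : Fin n, Atil i j') + Atil i j := by
    intro j i
    have h1 : ∀ j' : Fin n, ∑ i' : Fin n, (1 + if i = i' then (1:ℝ) else 0) * Atil i' j'
        = (∑ i' : Fin n, Atil i' j') + Atil i j' := by
      intro j'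
      simp_rw [add_mul, one_mul, ite_mul, one_mul, zero_mul, Finset.sum_add_distrib,
        Finset.sum_ite_eq, Finset.mem_univ, if_true]
    simp_rw [← Finset.mul_sum, h1]
    simp only [add_mul, one_mul, ite_mul, zero_mul, mul_add, Finset.sum_add_distrib,
      Finset.sum_ite_eq, Finset.mem_univ, if_true]
    ring
  have hLHS : vecA ⬝ᵥ ((J + 1) ⊗ₖ (J + 1)).mulVec vecA
      = ∑ j : Fin n, ∑ i : Fin n, Atil i j *
          (∑ j' : Fin n, ∑ i' : Fin n,
            ((1 + if j = j' then (1:ℝ) else 0) * ((1 + if i = i' then (1:ℝ) else 0) * Atil i' j'))) := by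
    simp only [dotProduct, mulVec, Fintype.sum_prod_type, kroneckerMap_apply,
      Matrix.add_apply, Matrix.one_apply, hJ, hvec]
    congr 1; ext j; congr 1; ext i; congr 1; congr 1; ext j'; congr 1; ext i'
    ring
  rw [hLHS]
  simp_rw [inner, mul_add, Finset.sum_add_distrib, ← Finset.sum_mul]
  have c2 : (∑ x : Fin n, ∑ y : Fin n, Atil y x * ∑ j' : Fin n, Atil y j')
      = ∑ y : Fin n, (∑ j' : Fin n, Atil y j') * (∑ j' : Fin n, Atil y j') := by
    rw [Finset.sum_comm]
    simp_rw [← Finset.sum_mul]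
  rw [c2]
  simp only [pow_two]
end

section
/- Let k ≥ 3 and d ≥ 1 be integers. Let M = [m_{pq}] be a k×k doubly stochastic matrix, and let (ℓ_{pqrs}), indexed by p,q,r,s ∈ {1,…,k} with p ≠ r and q ≠ s, be nonnegative reals satisfying ℓ_{pqrs} = ℓ_{rspq} and, for each p,q: ∑_{r≠p, s≠q} ℓ_{pqrs} = d·m_{pq}. Then ∏_{p<r, q≠s} ℓ_{pqrs}^{−ℓ_{pqrs}} ≤ ( ∏_{p,q} m_{pq}^{m_{pq}} )^{−d} · ( (∑_{p≠r, q≠s} m_{pq} m_{rs}) / (dk) )^{dk/2}. -/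
open Finset Real

lemma rpow_sum_helper {ι : Type*} {x : ℝ} (hx : 0 ≤ x) (s : Finset ι) (f : ι → ℝ)
    (h0 : x = 0 → ∀ i ∈ s, f i = 0) : x ^ (∑ i ∈ s, f i) = ∏ i ∈ s, x ^ (f i) := by
  rcases eq_or_lt_of_le hx with h | h
  · have hf := h0 h.symm
    rw [Finset.sum_eq_zero hf, Real.rpow_zero]
    exact (Finset.prod_eq_one fun i hi => by rw [hf i hi, Real.rpow_zero]).symm
  · exact Real.rpow_sum_of_pos h f s

lemma gibbs_ineq {ι : Type*} (s : Finset ι) (l a : ι → ℝ) (T : ℝ)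
    (hl : ∀ i ∈ s, 0 ≤ l i) (ha : ∀ i ∈ s, 0 ≤ a i)
    (h0 : ∀ i ∈ s, a i = 0 → l i = 0)
    (hT : 0 < T) (hTsum : ∑ i ∈ s, l i = T) :
    ∏ i ∈ s, (l i) ^ (-(l i)) ≤ ((∑ i ∈ s, a i) / T) ^ T * ∏ i ∈ s, (a i) ^ (-(l i)) := by
  set z : ι → ℝ := fun i => a i / l i with hz
  have hznn : ∀ i ∈ s, 0 ≤ z i := fun i hi => div_nonneg (ha i hi) (hl i hi)
  have amgm : ∏ i ∈ s, z i ^ (l i / T) ≤ (∑ i ∈ s, a i) / T := by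
    have h1 : ∏ i ∈ s, z i ^ (l i / T) ≤ ∑ i ∈ s, (l i / T) * z i :=
      Real.geom_mean_le_arith_mean_weighted s _ _
        (fun i hi => div_nonneg (hl i hi) hT.le)
        (by rw [← Finset.sum_div, hTsum, div_self hT.ne']) hznn
    refine h1.trans ?_
    rw [Finset.sum_div]
    refine Finset.sum_le_sum fun i hi => ?_
    rcases eq_or_lt_of_le (hl i hi) with h | h
    · rw [← h]
      simp only [zero_div, zero_mul]
      exact div_nonneg (ha i hi) hT.le
    · have : l i / T * z i = a i / T := by
        simp only [hz]
        rw [div_mul_div_comm, mul_comm T (l i), mul_div_mul_left _ _ h.ne']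
      rw [this]
  have hPnn : 0 ≤ ∏ i ∈ s, z i ^ (l i / T) :=
    Finset.prod_nonneg fun i hi => Real.rpow_nonneg (hznn i hi) _
  have key : ∏ i ∈ s, z i ^ (l i) ≤ ((∑ i ∈ s, a i) / T) ^ T := by
    calc ∏ i ∈ s, z i ^ l i
        = ∏ i ∈ s, (z i ^ (l i / T)) ^ T := by
          refine Finset.prod_congr rfl fun i hi => ?_
          rw [← Real.rpow_mul (hznn i hi), div_mul_cancel₀ _ hT.ne']
      _ = (∏ i ∈ s, z i ^ (l i / T)) ^ T :=
          Real.finset_prod_rpow s _ (fun i hi => Real.rpow_nonneg (hznn i hi) _) T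
      _ ≤ ((∑ i ∈ s, a i) / T) ^ T := Real.rpow_le_rpow hPnn amgm hT.le
  have hfact : ∀ i ∈ s, l i ^ (-(l i)) = z i ^ (l i) * a i ^ (-(l i)) := by
    intro i hi
    rcases eq_or_lt_of_le (hl i hi) with h | h
    · rw [← h]; simp
    · have hai : 0 < a i := lt_of_le_of_ne (ha i hi) (fun e => h.ne' (h0 i hi e.symm))
      have hal : (a i) ^ (l i) ≠ 0 := (Real.rpow_pos_of_pos hai _).ne'
      simp only [hz]
      rw [Real.div_rpow (ha i hi) (hl i hi), Real.rpow_neg (ha i hi), Real.rpow_neg (hl i hi),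
        div_mul_eq_mul_div, mul_inv_cancel₀ hal, one_div]
  calc ∏ i ∈ s, l i ^ (-(l i))
      = (∏ i ∈ s, z i ^ l i) * ∏ i ∈ s, a i ^ (-(l i)) := by
        rw [← Finset.prod_mul_distrib]; exact Finset.prod_congr rfl hfact
    _ ≤ ((∑ i ∈ s, a i) / T) ^ T * ∏ i ∈ s, a i ^ (-(l i)) :=
        mul_le_mul_of_nonneg_right key
          (Finset.prod_nonneg fun i hi => Real.rpow_nonneg (ha i hi) _)

lemma sum_quad {α β : Type*} [Fintype α] [AddCommMonoid β] (g : α → α → α → α → β) :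
    ∑ x : (α × α) × α × α, g x.1.1 x.1.2 x.2.1 x.2.2 = ∑ p, ∑ q, ∑ r, ∑ s, g p q r s := by
  simp only [Fintype.sum_prod_type]

lemma prod_quad {α β : Type*} [Fintype α] [CommMonoid β] (g : α → α → α → α → β) :
    ∏ x : (α × α) × α × α, g x.1.1 x.1.2 x.2.1 x.2.2 = ∏ p, ∏ q, ∏ r, ∏ s, g p q r s := by
  simp only [Fintype.prod_prod_type]


/-- Lemma on the maximum of the entropy-like product: for a doubly stochastic M and
nonnegative reals ℓ_{pqrs} (p≠r, q≠s) with ℓ_{pqrs} = ℓ_{rspq} and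
∑_{r≠p,s≠q} ℓ_{pqrs} = d·m_{pq},
∏_{p<r,q≠s} ℓ_{pqrs}^{−ℓ_{pqrs}} ≤ (∏ m_{pq}^{m_{pq}})^{−d} ((∑_{p≠r,q≠s} m_{pq}m_{rs})/(dk))^{dk/2}.
Powers are real powers (rpow), so the convention 0⁰ = 1 holds. -/
theorem stmt_10 (k d : ℕ) (hk : 3 ≤ k) (hd : 1 ≤ d)
    (M : Matrix (Fin k) (Fin k) ℝ)
    (hMnn : ∀ p q, 0 ≤ M p q)
    (hMrow : ∀ p, ∑ q, M p q = 1) (hMcol : ∀ q, ∑ p, M p q = 1)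
    (ℓ : Fin k → Fin k → Fin k → Fin k → ℝ)
    (hℓnn : ∀ p q r s, 0 ≤ ℓ p q r s)
    (hℓsym : ∀ p q r s, ℓ p q r s = ℓ r s p q)
    (hℓsum : ∀ p q, ∑ r, ∑ s, (if r ≠ p ∧ s ≠ q then ℓ p q r s else 0) = d * M p q) :
    (∏ p : Fin k, ∏ q : Fin k, ∏ r : Fin k, ∏ s : Fin k,
        if p < r ∧ q ≠ s then ℓ p q r s ^ (-(ℓ p q r s)) else 1) ≤
      (∏ p : Fin k, ∏ q : Fin k, M p q ^ (M p q)) ^ (-(d : ℝ)) *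
        ((∑ p : Fin k, ∑ q : Fin k, ∑ r : Fin k, ∑ s : Fin k,
            if p ≠ r ∧ q ≠ s then M p q * M r s else 0) / (d * k)) ^ ((d * k : ℝ) / 2) := by
  have hk0 : (0:ℝ) < k := by
    have : (0:ℕ) < k := by omega
    exact_mod_cast this
  have hd0 : (0:ℝ) < d := by
    have : (0:ℕ) < d := by omega
    exact_mod_cast this
  have hT : (0:ℝ) < (d:ℝ) * k := mul_pos hd0 hk0
  -- zero propagation
  have hzero : ∀ p q r s, r ≠ p → s ≠ q → M p q = 0 → ℓ p q r s = 0 := by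
    intro p q r s hr hs hM
    have hsum := hℓsum p q
    rw [hM, mul_zero] at hsum
    have hnn1 : ∀ r' ∈ (univ : Finset (Fin k)),
        (0:ℝ) ≤ ∑ s', (if r' ≠ p ∧ s' ≠ q then ℓ p q r' s' else 0) := by
      intro r' _
      refine Finset.sum_nonneg fun s' _ => ?_
      split_ifs with h
      exacts [hℓnn _ _ _ _, le_rfl]
    have h2 := (Finset.sum_eq_zero_iff_of_nonneg hnn1).1 hsum r (mem_univ r)
    have hnn2 : ∀ s' ∈ (univ : Finset (Fin k)),
        (0:ℝ) ≤ (if r ≠ p ∧ s' ≠ q then ℓ p q r s' else 0) := by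
      intro s' _
      split_ifs with h
      exacts [hℓnn _ _ _ _, le_rfl]
    have h3 := (Finset.sum_eq_zero_iff_of_nonneg hnn2).1 h2 s (mem_univ s)
    simpa [hr, hs] using h3
  -- symmetric marginal
  have hℓsum2 : ∀ r s, ∑ p, ∑ q, (if p ≠ r ∧ q ≠ s then ℓ p q r s else 0) = d * M r s := by
    intro r s
    rw [← hℓsum r s]
    exact Finset.sum_congr rfl fun p _ => Finset.sum_congr rfl fun q _ => by rw [hℓsym]
  -- marginal in (p≠r ∧ q≠s) form
  have hmarg : ∀ p q : Fin k,
      (∑ r, ∑ s', if p ≠ r ∧ q ≠ s' then ℓ p q r s' else 0) = d * M p q := by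
    intro p q
    rw [← hℓsum p q]
    refine Finset.sum_congr rfl fun r _ => Finset.sum_congr rfl fun s' _ => ?_
    exact if_congr ⟨fun h => ⟨h.1.symm, h.2.symm⟩, fun h => ⟨h.1.symm, h.2.symm⟩⟩ rfl rfl
  -- index type and data
  set σ := (Fin k × Fin k) × (Fin k × Fin k) with hσ
  set L : σ → ℝ := fun x => ℓ x.1.1 x.1.2 x.2.1 x.2.2 with hL
  set Aa : σ → ℝ := fun x => M x.1.1 x.1.2 * M x.2.1 x.2.2 with hAa
  set f : σ → ℝ := fun x => L x ^ (-(L x)) with hf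
  set sF : Finset σ := univ.filter (fun x : σ => x.1.1 ≠ x.2.1 ∧ x.1.2 ≠ x.2.2) with hsF
  set s1 : Finset σ := univ.filter (fun x : σ => x.1.1 < x.2.1 ∧ x.1.2 ≠ x.2.2) with hs1
  set s2 : Finset σ := univ.filter (fun x : σ => x.2.1 < x.1.1 ∧ x.1.2 ≠ x.2.2) with hs2
  -- inner marginal over pair type
  have hinner : ∀ a : Fin k × Fin k,
      (∑ b : Fin k × Fin k, if a.1 ≠ b.1 ∧ a.2 ≠ b.2 then ℓ a.1 a.2 b.1 b.2 else 0)
        = (d:ℝ) * M a.1 a.2 := by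
    intro a
    rw [Fintype.sum_prod_type]
    exact hmarg a.1 a.2
  have hsumL : ∑ x ∈ sF, L x = (d:ℝ) * k := by
    rw [hsF, Finset.sum_filter, Fintype.sum_prod_type]
    calc (∑ a : Fin k × Fin k, ∑ b : Fin k × Fin k,
            if a.1 ≠ b.1 ∧ a.2 ≠ b.2 then L (a, b) else 0)
        = ∑ a : Fin k × Fin k, (d:ℝ) * M a.1 a.2 := by
          refine Finset.sum_congr rfl fun a _ => ?_
          rw [← hinner a]
      _ = ∑ p, ∑ q, (d:ℝ) * M p q := Fintype.sum_prod_type _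
      _ = (d:ℝ) * k := by
          rw [Finset.sum_congr rfl fun p (_ : p ∈ univ) =>
            (by rw [← Finset.mul_sum, hMrow, mul_one] : (∑ q, (d:ℝ) * M p q) = (d:ℝ))]
          simp [Finset.sum_const, Finset.card_univ, mul_comm]
  -- abstract the sum S and product E in the goal
  set Sv := (∑ p : Fin k, ∑ q : Fin k, ∑ r : Fin k, ∑ s : Fin k,
      if p ≠ r ∧ q ≠ s then M p q * M r s else 0) with hSv
  set Ev := (∏ p : Fin k, ∏ q : Fin k, M p q ^ (M p q)) with hEv
  have hsumA : ∑ x ∈ sF, Aa x = Sv := by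
    rw [hsF, Finset.sum_filter, hSv,
      ← sum_quad (fun p q r s => if p ≠ r ∧ q ≠ s then M p q * M r s else 0)]
  have hnnL : ∀ x ∈ sF, 0 ≤ L x := fun x _ => hℓnn _ _ _ _
  have hnnA : ∀ x ∈ sF, 0 ≤ Aa x := fun x _ => mul_nonneg (hMnn _ _) (hMnn _ _)
  have h0A : ∀ x ∈ sF, Aa x = 0 → L x = 0 := by
    intro x hx hA
    rw [hsF, Finset.mem_filter] at hx
    rcases mul_eq_zero.mp hA with h | h
    · exact hzero _ _ _ _ (Ne.symm hx.2.1) (Ne.symm hx.2.2) h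
    · rw [hL]
      dsimp only
      rw [hℓsym]
      exact hzero _ _ _ _ hx.2.1 hx.2.2 h
  have hS : 0 < Sv := by
    rw [← hsumA]
    apply Finset.sum_pos' hnnA
    by_contra hcon
    push_neg at hcon
    have hz : ∑ x ∈ sF, L x = 0 :=
      Finset.sum_eq_zero fun x hx => h0A x hx (le_antisymm (hcon x hx) (hnnA x hx))
    rw [hsumL] at hz
    exact hT.ne' hz
  have hEv0 : 0 < Ev := by
    rw [hEv]
    refine Finset.prod_pos fun p _ => Finset.prod_pos fun q _ => ?_
    rcases eq_or_lt_of_le (hMnn p q) with h | h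
    · rw [← h, Real.rpow_zero]; norm_num
    · exact Real.rpow_pos_of_pos h _
  -- the truncated ℓ
  set L' : σ → ℝ := fun x => if x.1.1 ≠ x.2.1 ∧ x.1.2 ≠ x.2.2 then L x else 0 with hL'
  have hmargL1 : ∀ a : Fin k × Fin k, (∑ b : Fin k × Fin k, L' (a, b)) = (d:ℝ) * M a.1 a.2 :=
    fun a => hinner a
  have hmargL2 : ∀ b : Fin k × Fin k, (∑ a : Fin k × Fin k, L' (a, b)) = (d:ℝ) * M b.1 b.2 := by
    intro b
    rw [Fintype.sum_prod_type]
    exact hℓsum2 b.1 b.2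
  have hz1 : ∀ a : Fin k × Fin k, M a.1 a.2 = 0 →
      ∀ b ∈ (univ : Finset (Fin k × Fin k)), -(L' (a, b)) = 0 := by
    intro a hM0 b _
    rw [hL']
    dsimp only
    split_ifs with h
    · rw [neg_eq_zero]
      exact hzero _ _ _ _ (Ne.symm h.1) (Ne.symm h.2) hM0
    · exact neg_zero
  have hz2 : ∀ b : Fin k × Fin k, M b.1 b.2 = 0 →
      ∀ a ∈ (univ : Finset (Fin k × Fin k)), -(L' (a, b)) = 0 := by
    intro b hM0 a _
    rw [hL']
    dsimp only
    split_ifs with h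
    · rw [neg_eq_zero, hL]
      dsimp only
      rw [hℓsym]
      exact hzero _ _ _ _ h.1 h.2 hM0
    · exact neg_zero
  have fac1 : (∏ x : σ, M x.1.1 x.1.2 ^ (-(L' x))) = Ev ^ (-(d:ℝ)) := by
    rw [Fintype.prod_prod_type]
    have step : ∀ a : Fin k × Fin k, (∏ b : Fin k × Fin k, M a.1 a.2 ^ (-(L' (a, b))))
        = (M a.1 a.2 ^ (M a.1 a.2)) ^ (-(d:ℝ)) := by
      intro a
      have hsn : (∑ b : Fin k × Fin k, -(L' (a, b))) = M a.1 a.2 * (-(d:ℝ)) := by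
        rw [Finset.sum_neg_distrib, hmargL1 a]; ring
      rw [← rpow_sum_helper (hMnn a.1 a.2) univ (fun b => -(L' (a, b))) (hz1 a), hsn,
        Real.rpow_mul (hMnn a.1 a.2)]
    rw [Finset.prod_congr rfl fun a _ => step a,
      Real.finset_prod_rpow univ _ (fun a _ => Real.rpow_nonneg (hMnn a.1 a.2) _) _]
    congr 1
    rw [hEv]
    exact Fintype.prod_prod_type _
  have fac2 : (∏ x : σ, M x.2.1 x.2.2 ^ (-(L' x))) = Ev ^ (-(d:ℝ)) := by
    rw [Fintype.prod_prod_type]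
    rw [Finset.prod_comm]
    have step : ∀ b : Fin k × Fin k, (∏ a : Fin k × Fin k, M b.1 b.2 ^ (-(L' (a, b))))
        = (M b.1 b.2 ^ (M b.1 b.2)) ^ (-(d:ℝ)) := by
      intro b
      have hsn : (∑ a : Fin k × Fin k, -(L' (a, b))) = M b.1 b.2 * (-(d:ℝ)) := by
        rw [Finset.sum_neg_distrib, hmargL2 b]; ring
      rw [← rpow_sum_helper (hMnn b.1 b.2) univ (fun a => -(L' (a, b))) (hz2 b), hsn,
        Real.rpow_mul (hMnn b.1 b.2)]
    rw [Finset.prod_congr rfl fun b _ => step b,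
      Real.finset_prod_rpow univ _ (fun b _ => Real.rpow_nonneg (hMnn b.1 b.2) _) _]
    congr 1
    rw [hEv]
    exact Fintype.prod_prod_type _
  have prodA : ∏ x ∈ sF, Aa x ^ (-(L x)) = Ev ^ (-(2 * (d:ℝ))) := by
    rw [hsF, Finset.prod_filter]
    have hpt : ∀ x : σ, (if x.1.1 ≠ x.2.1 ∧ x.1.2 ≠ x.2.2 then Aa x ^ (-(L x)) else 1)
        = M x.1.1 x.1.2 ^ (-(L' x)) * M x.2.1 x.2.2 ^ (-(L' x)) := by
      intro x
      rw [hL']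
      dsimp only
      split_ifs with h
      · rw [hAa]
        dsimp only
        rw [Real.mul_rpow (hMnn _ _) (hMnn _ _)]
      · rw [neg_zero, Real.rpow_zero, Real.rpow_zero, one_mul]
    rw [Finset.prod_congr rfl fun x _ => hpt x, Finset.prod_mul_distrib, fac1, fac2,
      ← Real.rpow_add hEv0]
    congr 1
    ring
  -- the Gibbs bound on the full product
  have main : ∏ x ∈ sF, f x ≤ (Sv / ((d:ℝ) * k)) ^ ((d:ℝ) * k) * Ev ^ (-(2 * (d:ℝ))) := by
    have h := gibbs_ineq sF L Aa ((d:ℝ) * k) hnnL hnnA h0A hT hsumL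
    rw [hsumA, prodA] at h
    exact h
  -- rewrite goal LHS as product over s1
  have hQ1 : (∏ p : Fin k, ∏ q : Fin k, ∏ r : Fin k, ∏ s : Fin k,
      if p < r ∧ q ≠ s then ℓ p q r s ^ (-(ℓ p q r s)) else 1) = ∏ x ∈ s1, f x := by
    rw [hs1, Finset.prod_filter,
      ← prod_quad (fun p q r s => if p < r ∧ q ≠ s then ℓ p q r s ^ (-(ℓ p q r s)) else 1)]
  have hset1 : sF.filter (fun x => x.1.1 < x.2.1) = s1 := by
    rw [hsF, hs1, Finset.filter_filter]
    ext x
    simp only [Finset.mem_filter, Finset.mem_univ, true_and]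
    constructor
    · rintro ⟨⟨h1, h2⟩, h3⟩; exact ⟨h3, h2⟩
    · rintro ⟨h1, h2⟩; exact ⟨⟨ne_of_lt h1, h2⟩, h1⟩
  have hset2 : sF.filter (fun x => ¬ x.1.1 < x.2.1) = s2 := by
    rw [hsF, hs2, Finset.filter_filter]
    ext x
    simp only [Finset.mem_filter, Finset.mem_univ, true_and]
    constructor
    · rintro ⟨⟨h1, h2⟩, h3⟩
      exact ⟨lt_of_le_of_ne (not_lt.mp h3) (Ne.symm h1), h2⟩
    · rintro ⟨h1, h2⟩
      exact ⟨⟨ne_of_gt h1, h2⟩, not_lt.mpr h1.le⟩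
  have hsplit : ∏ x ∈ sF, f x = (∏ x ∈ s1, f x) * ∏ x ∈ s2, f x := by
    rw [← Finset.prod_filter_mul_prod_filter_not sF (fun x => x.1.1 < x.2.1) f, hset1, hset2]
  have hswap : ∏ x ∈ s2, f x = ∏ x ∈ s1, f x := by
    refine Finset.prod_nbij' (fun x => (x.2, x.1)) (fun x => (x.2, x.1)) ?_ ?_ ?_ ?_ ?_
    · intro x hx
      rw [hs2, Finset.mem_filter] at hx
      rw [hs1, Finset.mem_filter]
      exact ⟨Finset.mem_univ _, hx.2.1, Ne.symm hx.2.2⟩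
    · intro x hx
      rw [hs1, Finset.mem_filter] at hx
      rw [hs2, Finset.mem_filter]
      exact ⟨Finset.mem_univ _, hx.2.1, Ne.symm hx.2.2⟩
    · intro x _; rfl
    · intro x _; rfl
    · intro x _
      have hLx : L x = L (x.2, x.1) := hℓsym _ _ _ _
      rw [hf]
      dsimp only
      rw [hLx]
  -- final conclusion via square roots
  rw [hQ1]
  set R := Ev ^ (-(d:ℝ)) * (Sv / ((d:ℝ) * (k:ℝ))) ^ (((d:ℝ) * (k:ℝ)) / 2) with hR
  have hQnn : 0 ≤ ∏ x ∈ s1, f x :=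
    Finset.prod_nonneg fun x _ => Real.rpow_nonneg (hℓnn _ _ _ _) _
  have hRnn : 0 ≤ R :=
    mul_nonneg (Real.rpow_nonneg hEv0.le _)
      (Real.rpow_nonneg (div_nonneg hS.le hT.le) _)
  have hsq : (∏ x ∈ s1, f x) * (∏ x ∈ s1, f x) ≤ R * R := by
    have e0 : ∏ x ∈ sF, f x = (∏ x ∈ s1, f x) * (∏ x ∈ s1, f x) := by
      rw [hsplit, hswap]
    have e1 : Ev ^ (-(d:ℝ)) * Ev ^ (-(d:ℝ)) = Ev ^ (-(2 * (d:ℝ))) := by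
      rw [← Real.rpow_add hEv0]
      ring_nf
    have e2 : (Sv / ((d:ℝ) * k)) ^ (((d:ℝ) * k) / 2) * (Sv / ((d:ℝ) * k)) ^ (((d:ℝ) * k) / 2)
        = (Sv / ((d:ℝ) * k)) ^ ((d:ℝ) * k) := by
      rw [← Real.rpow_add (div_pos hS hT)]
      ring_nf
    have e3 : R * R = (Sv / ((d:ℝ) * k)) ^ ((d:ℝ) * k) * Ev ^ (-(2 * (d:ℝ))) := by
      rw [hR, show (Ev ^ (-(d:ℝ)) * (Sv / ((d:ℝ) * (k:ℝ))) ^ (((d:ℝ) * (k:ℝ)) / 2)) *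
          (Ev ^ (-(d:ℝ)) * (Sv / ((d:ℝ) * (k:ℝ))) ^ (((d:ℝ) * (k:ℝ)) / 2))
          = (Ev ^ (-(d:ℝ)) * Ev ^ (-(d:ℝ))) *
            ((Sv / ((d:ℝ) * k)) ^ (((d:ℝ) * k) / 2) * (Sv / ((d:ℝ) * k)) ^ (((d:ℝ) * k) / 2))
          from by ring, e1, e2, mul_comm]
    rw [← e0, e3]
    exact main
  calc ∏ x ∈ s1, f x
      = Real.sqrt ((∏ x ∈ s1, f x) * (∏ x ∈ s1, f x)) := (Real.sqrt_mul_self hQnn).symm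
    _ ≤ Real.sqrt (R * R) := Real.sqrt_le_sqrt hsq
    _ = R := Real.sqrt_mul_self hRnn
end

section
/- Let 0 < δ < 2π/5 and k ≥ 3. Suppose θ_{p,q} ∈ [−π, π] for 1 ≤ p,q ≤ k, with max_{p,q}|θ_{p,q}| > δ and min_{p,q}|θ_{p,q}| < π − δ. Then there exist p, q, r, s with p ≠ r and q ≠ s such that δ/2 ≤ |θ_{p,q} + θ_{r,s}| ≤ 2π − δ/2. -/
open Real

/-- In `Fin k` with `k ≥ 3`, we can avoid any two given indices. -/
lemma fin_avoid_aux {k : ℕ} (hk : 3 ≤ k) (a b : Fin k) : ∃ c : Fin k, c ≠ a ∧ c ≠ b := by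
  by_contra h
  push_neg at h
  have hall : ∀ c : Fin k, c = a ∨ c = b := fun c => or_iff_not_imp_left.mpr (h c)
  have hsub : (Finset.univ : Finset (Fin k)) ⊆ {a, b} := by
    intro c _
    rcases hall c with h1 | h1 <;> simp [h1]
  have h1 := Finset.card_le_card hsub
  have h2 := Finset.card_insert_le a ({b} : Finset (Fin k))
  simp [Finset.card_univ] at h1 h2
  omega

/-- Saddlepoint pairing lemma: if 0 < δ < 2π/5, θ_{p,q} ∈ [−π,π] with some |θ_{p,q}| > δ
and some |θ_{p,q}| < π − δ, then there exist p ≠ r and q ≠ s with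
δ/2 ≤ |θ_{p,q} + θ_{r,s}| ≤ 2π − δ/2. -/
theorem stmt_14 (k : ℕ) (hk : 3 ≤ k) (δ : ℝ) (hδ0 : 0 < δ) (hδ : δ < 2 * π / 5)
    (θ : Fin k → Fin k → ℝ)
    (hθ : ∀ p q, |θ p q| ≤ π)
    (hmax : ∃ p q, δ < |θ p q|)
    (hmin : ∃ p q, |θ p q| < π - δ) :
    ∃ p q r s : Fin k, p ≠ r ∧ q ≠ s ∧
      δ / 2 ≤ |θ p q + θ r s| ∧ |θ p q + θ r s| ≤ 2 * π - δ / 2 := by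
  by_contra hcon
  push_neg at hcon
  have hπ := Real.pi_pos
  obtain ⟨pb, qb, hb⟩ := hmin
  obtain ⟨pa, qa, ha⟩ := hmax
  -- If a disjoint pair fails and the second entry is below π - δ/2, the pair sum is small.
  have low : ∀ p q r s : Fin k, p ≠ r → q ≠ s → |θ r s| < π - δ / 2 →
      |θ p q + θ r s| < δ / 2 := by
    intro p q r s hpr hqs hrs
    by_contra hge
    push_neg at hge
    have hB := hcon p q r s hpr hqs hge
    have h1 := abs_add_le (θ p q) (θ r s)
    have h2 := hθ p q
    linarith
  -- Every cell disjoint from b has |θ| < 3δ/4.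
  have hsmall : ∀ r s : Fin k, r ≠ pb → s ≠ qb → |θ r s| < 3 * δ / 4 := by
    intro r s hr hs
    obtain ⟨r', hr1, hr2⟩ := fin_avoid_aux hk pb r
    obtain ⟨s', hs1, hs2⟩ := fin_avoid_aux hk qb s
    have l1 : |θ r s + θ pb qb| < δ / 2 := low r s pb qb hr hs (by linarith)
    have l2 : |θ r' s' + θ pb qb| < δ / 2 := low r' s' pb qb hr1 hs1 (by linarith)
    obtain ⟨l2a, l2b⟩ := abs_lt.mp l2
    obtain ⟨hba, hbb⟩ := abs_lt.mp hb
    have hbz : |θ r' s'| < π - δ / 2 :=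
      abs_lt.mpr ⟨by linarith, by linarith⟩
    have l3 : |θ r s + θ r' s'| < δ / 2 := low r s r' s' hr2.symm hs2.symm hbz
    obtain ⟨l1a, l1b⟩ := abs_lt.mp l1
    obtain ⟨l3a, l3b⟩ := abs_lt.mp l3
    exact abs_lt.mpr ⟨by linarith, by linarith⟩
  -- Hence every cell has |θ| < 5δ/4 (which is < π - δ/2).
  have hall : ∀ p q : Fin k, |θ p q| < 5 * δ / 4 := by
    intro p q
    obtain ⟨r, hr1, hr2⟩ := fin_avoid_aux hk p pb
    obtain ⟨s, hs1, hs2⟩ := fin_avoid_aux hk q qb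
    have hrs : |θ r s| < 3 * δ / 4 := hsmall r s hr2 hs2
    have l : |θ p q + θ r s| < δ / 2 :=
      low p q r s hr1.symm hs1.symm (by linarith)
    obtain ⟨la, lb⟩ := abs_lt.mp l
    obtain ⟨ra, rb⟩ := abs_lt.mp hrs
    exact abs_lt.mpr ⟨by linarith, by linarith⟩
  -- Apply the three-cell argument to the maximal cell a: contradiction.
  obtain ⟨r1, hr1a, _⟩ := fin_avoid_aux hk pa pa
  obtain ⟨r2, hr2a, hr2b⟩ := fin_avoid_aux hk pa r1
  obtain ⟨s1, hs1a, _⟩ := fin_avoid_aux hk qa qa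
  obtain ⟨s2, hs2a, hs2b⟩ := fin_avoid_aux hk qa s1
  have b1 : |θ r1 s1| < π - δ / 2 := by have := hall r1 s1; linarith
  have b2 : |θ r2 s2| < π - δ / 2 := by have := hall r2 s2; linarith
  have l1 : |θ pa qa + θ r1 s1| < δ / 2 := low pa qa r1 s1 hr1a.symm hs1a.symm b1
  have l2 : |θ pa qa + θ r2 s2| < δ / 2 := low pa qa r2 s2 hr2a.symm hs2a.symm b2
  have l3 : |θ r1 s1 + θ r2 s2| < δ / 2 := low r1 s1 r2 s2 hr2b.symm hs2b.symm b2
  obtain ⟨l1a, l1b⟩ := abs_lt.mp l1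
  obtain ⟨l2a, l2b⟩ := abs_lt.mp l2
  obtain ⟨l3a, l3b⟩ := abs_lt.mp l3
  have : |θ pa qa| < 3 * δ / 4 := abs_lt.mpr ⟨by linarith, by linarith⟩
  linarith
end
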